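/- arXiv:2206.00395 — 2 statements merged into one kernel-verified Lean document; each statement's English description precedes it below -/
import Mathlib

section
/- Let f, h : ℝ^d → ℝ be twice continuously differentiable and satisfy δ-Hessian similarity, let K ≥ 1 be an integer, and let 0 < η satisfy η ≤ 1/(5δK) (no constraint on η when δ = 0). Let x, y, m ∈ ℝ^d and set e = m − ∇f(x) + ∇h(x). Let (Ω, μ) be a probability space and ξ : Ω → ℝ^d Bochner integrable with ∫ ξ dμ = 0 and ∫ ‖ξ‖² dμ ≤ σ_h². Then ∫ ‖y − η(∇h(y) + m + ξ(ω)) − x‖² dμ(ω) ≤ (1 + 1/K)‖y − x‖² + 12Kη²‖e‖² + 6Kη²‖∇f(y)‖² + η²σ_h². -/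
/-!
Without the noise, the displacement from the snapshot is `a = (y - x) + η w - η (e + ∇f y)` with
`w = ∇(f - h) y - ∇(f - h) x`. Hessian similarity makes `∇(f - h)` `δ`-Lipschitz, so
`‖w‖ ≤ δ ‖y - x‖`. Young's inequality with weight `1/(3K)` between the drift and the
correction, and with weight `2` between `e` and `∇f y`, together with `ηδ ≤ 1/(5K)`,
bounds `‖a‖²`.
The noise has mean zero, hence is orthogonal to `a` in `L²(μ)` and only adds `η² ∫ ‖ξ‖²`.
-/

open MeasureTheory

theorem norm_fderiv_sub_le_of_norm_iteratedFDeriv_two_le {E F : Type*} [NormedAddCommGroup E]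
    [NormedSpace ℝ E] [NormedAddCommGroup F] [NormedSpace ℝ F] {g : E → F} {C : ℝ}
    (hg : ContDiff ℝ 2 g) (hC : ∀ z, ‖iteratedFDeriv ℝ 2 g z‖ ≤ C) (x y : E) :
    ‖fderiv ℝ g y - fderiv ℝ g x‖ ≤ C * ‖y - x‖ := by
  have hdiff : Differentiable ℝ (fderiv ℝ g) :=
    (hg.fderiv_right (m := 1) le_rfl).differentiable one_ne_zero
  refine convex_univ.norm_image_sub_le_of_norm_fderiv_le (fun z _ => hdiff z)
    (fun z _ => ?_) (Set.mem_univ x) (Set.mem_univ y)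
  rw [← norm_iteratedFDeriv_one, norm_iteratedFDeriv_fderiv]
  exact hC z

theorem norm_gradient_sub_le_of_norm_iteratedFDeriv_two_le {E : Type*} [NormedAddCommGroup E]
    [InnerProductSpace ℝ E] [CompleteSpace E] {g : E → ℝ} {C : ℝ}
    (hg : ContDiff ℝ 2 g) (hC : ∀ z, ‖iteratedFDeriv ℝ 2 g z‖ ≤ C) (x y : E) :
    ‖gradient g y - gradient g x‖ ≤ C * ‖y - x‖ := by
  rw [gradient, gradient, ← map_sub, LinearIsometryEquiv.norm_map]
  exact norm_fderiv_sub_le_of_norm_iteratedFDeriv_two_le hg hC x y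

theorem gradient_sub_apply {E : Type*} [NormedAddCommGroup E] [InnerProductSpace ℝ E]
    [CompleteSpace E] {f h : E → ℝ} {x : E} (hf : DifferentiableAt ℝ f x)
    (hh : DifferentiableAt ℝ h x) :
    gradient (f - h) x = gradient f x - gradient h x := by
  rw [gradient, fderiv_sub hf hh, map_sub, gradient, gradient]

theorem add_sq_le_of_pos {ε : ℝ} (hε : 0 < ε) (a b : ℝ) :
    (a + b) ^ 2 ≤ (1 + ε) * a ^ 2 + (1 + ε⁻¹) * b ^ 2 := by
  have key : (1 + ε) * a ^ 2 + (1 + ε⁻¹) * b ^ 2 - (a + b) ^ 2 = (ε * a - b) ^ 2 / ε := by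
    field_simp
    ring
  have : 0 ≤ (ε * a - b) ^ 2 / ε := by positivity
  linarith

theorem norm_add_sq_le_of_pos {E : Type*} [SeminormedAddCommGroup E] {ε : ℝ} (hε : 0 < ε)
    (u v : E) : ‖u + v‖ ^ 2 ≤ (1 + ε) * ‖u‖ ^ 2 + (1 + ε⁻¹) * ‖v‖ ^ 2 :=
  (pow_le_pow_left₀ (norm_nonneg _) (norm_add_le u v) 2).trans (add_sq_le_of_pos hε _ _)

theorem norm_add_smul_sub_smul_sq_le {E : Type*} [SeminormedAddCommGroup E] [NormedSpace ℝ E]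
    {K η δ : ℝ} (hK : 1 ≤ K) (hη : 0 ≤ η) (hηδ : η * (5 * δ * K) ≤ 1) {r w : E}
    (hw : ‖w‖ ≤ δ * ‖r‖) (e g : E) :
    ‖r + η • w - η • (e + g)‖ ^ 2
      ≤ (1 + 1 / K) * ‖r‖ ^ 2 + 12 * K * η ^ 2 * ‖e‖ ^ 2 + 6 * K * η ^ 2 * ‖g‖ ^ 2 := by
  have hK0 : 0 < K := one_pos.trans_le hK
  set z := 1 / K with hz
  have hz0 : 0 < z := by positivity
  have hz1 : z ≤ 1 := by rw [hz, div_le_one hK0]; exact hK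
  have hu : ‖r + η • w‖ ≤ (1 + z / 5) * ‖r‖ := by
    have hηδ' : η * δ ≤ z / 5 := by
      rw [hz, le_div_iff₀ (by positivity)]; field_simp; linarith
    calc ‖r + η • w‖ ≤ ‖r‖ + η * (δ * ‖r‖) := by
          grw [norm_add_le, norm_smul, Real.norm_of_nonneg hη, hw]
      _ ≤ (1 + z / 5) * ‖r‖ := by nlinarith [norm_nonneg r]
  have hv : ‖e + g‖ ^ 2 ≤ 3 * ‖e‖ ^ 2 + 3 / 2 * ‖g‖ ^ 2 := by
    have := norm_add_sq_le_of_pos two_pos e g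
    norm_num at this ⊢; linarith
  have hpoly : (1 + z / 3) * (1 + z / 5) ^ 2 ≤ 1 + z := by
    nlinarith [mul_nonneg (mul_nonneg hz0.le hz0.le) (sub_nonneg.2 hz1),
      mul_nonneg hz0.le (sub_nonneg.2 hz1)]
  have h3K : (z / 3)⁻¹ = 3 * K := by rw [hz]; field_simp
  calc ‖r + η • w - η • (e + g)‖ ^ 2
      ≤ (1 + z / 3) * ‖r + η • w‖ ^ 2 + (1 + 3 * K) * ‖η • (e + g)‖ ^ 2 := by
        rw [sub_eq_add_neg, ← norm_neg (η • (e + g)), ← h3K]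
        exact norm_add_sq_le_of_pos (by positivity) _ _
    _ ≤ (1 + z / 3) * ((1 + z / 5) * ‖r‖) ^ 2 + (4 * K) * (η ^ 2 * ‖e + g‖ ^ 2) := by
        rw [norm_smul, Real.norm_of_nonneg hη, mul_pow]
        gcongr
        linarith
    _ ≤ (1 + z) * ‖r‖ ^ 2 + (4 * K) * (η ^ 2 * (3 * ‖e‖ ^ 2 + 3 / 2 * ‖g‖ ^ 2)) := by
        rw [mul_pow, ← mul_assoc]
        gcongr
    _ = (1 + z) * ‖r‖ ^ 2 + 12 * K * η ^ 2 * ‖e‖ ^ 2 + 6 * K * η ^ 2 * ‖g‖ ^ 2 := by ring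

theorem integral_norm_sub_sq_le {E Ω : Type*} [NormedAddCommGroup E] [InnerProductSpace ℝ E]
    [CompleteSpace E] [MeasurableSpace Ω] {μ : Measure Ω} [IsProbabilityMeasure μ]
    {ξ : Ω → E} (hint : Integrable ξ μ) (hmean : ∫ ω, ξ ω ∂μ = 0) (a : E) :
    ∫ ω, ‖a - ξ ω‖ ^ 2 ∂μ ≤ ‖a‖ ^ 2 + ∫ ω, ‖ξ ω‖ ^ 2 ∂μ := by
  have hinner : Integrable (fun ω => inner ℝ a (ξ ω)) μ := (innerSL ℝ a).integrable_comp hint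
  have hexpand : (fun ω => ‖a - ξ ω‖ ^ 2)
      = fun ω => ‖a‖ ^ 2 - 2 * inner ℝ a (ξ ω) + ‖ξ ω‖ ^ 2 :=
    funext fun ω => norm_sub_sq_real a (ξ ω)
  have hlin : Integrable (fun ω => ‖a‖ ^ 2 - 2 * inner ℝ a (ξ ω)) μ :=
    (integrable_const _).sub (hinner.const_mul 2)
  by_cases hsq : Integrable (fun ω => ‖ξ ω‖ ^ 2) μ
  · rw [hexpand, integral_add hlin hsq, integral_sub (integrable_const _) (hinner.const_mul 2),
      integral_const_mul, integral_inner hint, hmean, inner_zero_right]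
    simp
  · have hnot : ¬ Integrable (fun ω => ‖a - ξ ω‖ ^ 2) μ := by
      refine fun hint2 => hsq ?_
      rw [hexpand] at hint2
      refine (hint2.sub hlin).congr (Filter.Eventually.of_forall fun ω => ?_)
      simp only [Pi.sub_apply]
      ring
    rw [integral_undef hnot]
    positivity

/-- bound on the squared distance to the snapshot `x` after one
noisy bias-corrected local step. The step-size constraint `η ≤ 1/(5δK)` is
encoded as `η * (5δK) ≤ 1`, which is vacuous when `δ = 0`. -/
theorem stmt_6 {d : ℕ} (f h : EuclideanSpace ℝ (Fin d) → ℝ) (δ : ℝ)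
    (hf : ContDiff ℝ 2 f) (hh : ContDiff ℝ 2 h)
    (hsim : ∀ x, ‖iteratedFDeriv ℝ 2 f x - iteratedFDeriv ℝ 2 h x‖ ≤ δ)
    (K : ℕ) (hK : 1 ≤ K)
    (η : ℝ) (hη0 : 0 < η) (hη : η * (5 * δ * K) ≤ 1)
    (x y m : EuclideanSpace ℝ (Fin d))
    (e : EuclideanSpace ℝ (Fin d)) (he : e = m - gradient f x + gradient h x)
    (σh : ℝ)
    {Ω : Type*} [MeasurableSpace Ω] (μ : Measure Ω) [IsProbabilityMeasure μ]
    (ξ : Ω → EuclideanSpace ℝ (Fin d)) (hint : Integrable ξ μ)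
    (hmean : ∫ ω, ξ ω ∂μ = 0) (hvar : ∫ ω, ‖ξ ω‖ ^ 2 ∂μ ≤ σh ^ 2) :
    ∫ ω, ‖y - η • (gradient h y + m + ξ ω) - x‖ ^ 2 ∂μ
      ≤ (1 + 1 / K) * ‖y - x‖ ^ 2 + 12 * K * η ^ 2 * ‖e‖ ^ 2
        + 6 * K * η ^ 2 * ‖gradient f y‖ ^ 2 + η ^ 2 * σh ^ 2 := by
  have hfd := hf.differentiable two_ne_zero
  have hhd := hh.differentiable two_ne_zero
  have hw : ‖(gradient f y - gradient h y) - (gradient f x - gradient h x)‖ ≤ δ * ‖y - x‖ := by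
    have := norm_gradient_sub_le_of_norm_iteratedFDeriv_two_le (g := f - h) (hf.sub hh)
      (fun z => by rw [iteratedFDeriv_sub_apply hf.contDiffAt hh.contDiffAt]; exact hsim z) x y
    rwa [gradient_sub_apply (hfd y) (hhd y), gradient_sub_apply (hfd x) (hhd x)] at this
  set a := y - η • (gradient h y + m) - x
  have ha : a = (y - x) + η • ((gradient f y - gradient h y) - (gradient f x - gradient h x))
      - η • (e + gradient f y) := by
    rw [he]; module
  have hstep : ∀ ω, y - η • (gradient h y + m + ξ ω) - x = a - η • ξ ω := fun ω => by module
  calc ∫ ω, ‖y - η • (gradient h y + m + ξ ω) - x‖ ^ 2 ∂μ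
      ≤ ‖a‖ ^ 2 + ∫ ω, ‖η • ξ ω‖ ^ 2 ∂μ := by
        simp_rw [hstep]
        refine integral_norm_sub_sq_le (hint.smul η) ?_ a
        simp only [Pi.smul_apply, integral_smul, hmean, smul_zero]
    _ = ‖a‖ ^ 2 + η ^ 2 * ∫ ω, ‖ξ ω‖ ^ 2 ∂μ := by
        simp_rw [norm_smul, mul_pow, Real.norm_eq_abs, sq_abs, integral_const_mul]
    _ ≤ _ := by
        rw [ha]
        gcongr
        exact norm_add_smul_sub_smul_sq_le (by exact_mod_cast hK) hη0.le hη hw _ _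
end

section
/- Let f : ℝ^d → ℝ be L-smooth and bounded below by f*, and let f, h be twice continuously differentiable and satisfy δ-Hessian similarity with δ > 0. Fix integers K ≥ 1 and T ≥ 1, set η = min(1/L, 1/(192δK)) and a = 36δKη. Given x⁰, m⁰ ∈ ℝ^d, define for t = 1,…,T: m^t = (1−a)m^{t−1} + a(∇f(x^{t−1}) − ∇h(x^{t−1})); y^t_0 = x^{t−1}; y^t_k = y^t_{k−1} − η(∇h(y^t_{k−1}) + m^t) for k = 1,…,K; and x^t = y^t_K. Then (1/(8KT)) Σ_{t=1}^T Σ_{k=0}^{K−1} ‖∇f(y^t_k)‖² ≤ (L + 192δK)·F̃/(KT), where F̃ = f(x⁰) − f* + ‖m⁰ − ∇f(x⁰) + ∇h(x⁰)‖²/(8δ). -/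
open Finset InnerProductSpace
open scoped RealInnerProductSpace

/-!
Write `g = ∇f - ∇h`; Hessian similarity makes `g` `δ`-Lipschitz. In round `t` the local steps
follow `∇h + m_t`, whose error as an estimate of `∇f(y_{t,k})` is at most the momentum error
`e_t = ‖m_t - g(x_{t-1})‖` plus `δ‖y_{t,k} - x_{t-1}‖`. As `ηδK` is small, this drift is
controlled by `e_t` and the gradients along the round, so the descent lemma gives
`f(x_t) ≤ f(x_{t-1}) - η/4 ∑ₖ ‖∇f(y_{t,k})‖² + 2ηK e_t²` and
`‖x_t - x_{t-1}‖² ≤ 8η²K (∑ₖ ‖∇f(y_{t,k})‖² + K e_t²)`. The momentum update contracts the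
error, `e_{t+1}² ≤ (1 - a) e_t² + 3δ²/a ‖x_t - x_{t-1}‖²`. Summing the three recursions over
the rounds, the choice `a = 36δKη` lets the descent absorb the accumulated momentum error, and
`1/η ≤ L + 192δK` turns the step size into the rate.
-/

theorem norm_sub_apply_le_of_lipschitz {E F : Type*} [SeminormedAddCommGroup E]
    [SeminormedAddCommGroup F] {g : E → F} {δ : ℝ} (hg : ∀ u v, ‖g u - g v‖ ≤ δ * ‖u - v‖)
    (m : F) (z z₀ : E) : ‖m - g z‖ ≤ ‖m - g z₀‖ + δ * ‖z - z₀‖ := by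
  refine (norm_sub_le_norm_sub_add_norm_sub m (g z₀) (g z)).trans ?_
  rw [← norm_neg (z - z₀), neg_sub]
  gcongr
  exact hg _ _

section Gradient

variable {E : Type*} [NormedAddCommGroup E] [InnerProductSpace ℝ E] [CompleteSpace E]

theorem norm_gradient_sub_gradient (f : E → ℝ) (u v : E) :
    ‖gradient f u - gradient f v‖ = ‖fderiv ℝ f u - fderiv ℝ f v‖ := by
  rw [gradient, gradient, ← map_sub, LinearIsometryEquiv.norm_map]

theorem gradient_fun_sub {f h : E → ℝ} {x : E} (hf : DifferentiableAt ℝ f x)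
    (hh : DifferentiableAt ℝ h x) :
    gradient (fun z => f z - h z) x = gradient f x - gradient h x := by
  rw [gradient, gradient, gradient, fderiv_fun_sub hf hh, map_sub]

theorem norm_gradient_sub_le_of_norm_iteratedFDeriv_two_le_s12 {p : E → ℝ} {δ : ℝ}
    (hp : ContDiff ℝ 2 p) (hδ : ∀ x, ‖iteratedFDeriv ℝ 2 p x‖ ≤ δ) (u v : E) :
    ‖gradient p u - gradient p v‖ ≤ δ * ‖u - v‖ := by
  have hdiff : Differentiable ℝ (fderiv ℝ p) :=
    (hp.fderiv_right (m := 1) (by norm_num)).differentiable (by norm_num)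
  have hbound : ∀ x, ‖fderiv ℝ (fderiv ℝ p) x‖ ≤ δ := fun x => by
    rw [← norm_iteratedFDeriv_one, norm_iteratedFDeriv_fderiv]
    exact hδ x
  rw [norm_gradient_sub_gradient]
  exact convex_univ.norm_image_sub_le_of_norm_fderiv_le (fun x _ => hdiff x)
    (fun x _ => hbound x) (Set.mem_univ v) (Set.mem_univ u)

theorem norm_gradient_sub_gradient_sub_le {f h : E → ℝ} {δ : ℝ}
    (hf : ContDiff ℝ 2 f) (hh : ContDiff ℝ 2 h)
    (hsim : ∀ x, ‖iteratedFDeriv ℝ 2 f x - iteratedFDeriv ℝ 2 h x‖ ≤ δ) (u v : E) :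
    ‖gradient f u - gradient h u - (gradient f v - gradient h v)‖ ≤ δ * ‖u - v‖ := by
  have hfd : Differentiable ℝ f := hf.differentiable (by norm_num)
  have hhd : Differentiable ℝ h := hh.differentiable (by norm_num)
  rw [← gradient_fun_sub (hfd u) (hhd u), ← gradient_fun_sub (hfd v) (hhd v)]
  refine norm_gradient_sub_le_of_norm_iteratedFDeriv_two_le_s12 (hf.sub hh) (fun x => ?_) u v
  change ‖iteratedFDeriv ℝ 2 (f - h) x‖ ≤ δ
  rw [iteratedFDeriv_sub_apply hf.contDiffAt hh.contDiffAt]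
  exact hsim x

theorem norm_gradient_add_sub_gradient_le {f h : E → ℝ} {δ : ℝ}
    (hlip : ∀ u v, ‖gradient f u - gradient h u - (gradient f v - gradient h v)‖ ≤ δ * ‖u - v‖)
    (m z z₀ : E) :
    ‖gradient h z + m - gradient f z‖ ≤ ‖m - (gradient f z₀ - gradient h z₀)‖ + δ * ‖z - z₀‖ := by
  rw [show gradient h z + m - gradient f z = m - (gradient f z - gradient h z) by abel]
  exact norm_sub_apply_le_of_lipschitz hlip m z z₀

/-- The descent lemma. -/
theorem image_add_le_of_norm_gradient_sub_le {f : E → ℝ} {L : ℝ} (hf : Differentiable ℝ f)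
    (hL : ∀ x y, ‖gradient f x - gradient f y‖ ≤ L * ‖x - y‖) (u v : E) :
    f (u + v) ≤ f u + ⟪gradient f u, v⟫ + L / 2 * ‖v‖ ^ 2 := by
  let φ : ℝ → ℝ := fun t => f (u + t • v) - t * ⟪gradient f u, v⟫ - L / 2 * ‖v‖ ^ 2 * t ^ 2
  have hφ : ∀ t, HasDerivAt φ
      (⟪gradient f (u + t • v) - gradient f u, v⟫ - L * t * ‖v‖ ^ 2) t := by
    intro t
    have hline : HasDerivAt (fun t : ℝ => u + t • v) v t := by
      simpa using ((hasDerivAt_id t).smul_const v).const_add u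
    have hcomp : HasDerivAt (fun t : ℝ => f (u + t • v)) ⟪gradient f (u + t • v), v⟫ t := by
      rw [inner_gradient_left]
      exact (hf (u + t • v)).hasFDerivAt.comp_hasDerivAt t hline
    refine ((hcomp.sub ((hasDerivAt_id t).mul_const ⟪gradient f u, v⟫)).sub
      ((hasDerivAt_pow 2 t).const_mul (L / 2 * ‖v‖ ^ 2))).congr_deriv ?_
    simp only [one_mul, inner_sub_left]
    push_cast
    ring
  have hanti : AntitoneOn φ (Set.Icc 0 1) := by
    refine antitoneOn_of_hasDerivWithinAt_nonpos (convex_Icc 0 1)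
      (fun t _ => (hφ t).continuousAt.continuousWithinAt) (fun t _ => (hφ t).hasDerivWithinAt)
      (fun t ht => ?_)
    rw [interior_Icc] at ht
    rw [sub_nonpos]
    have hnorm : ‖u + t • v - u‖ = t * ‖v‖ := by
      rw [add_sub_cancel_left, norm_smul, Real.norm_of_nonneg ht.1.le]
    calc ⟪gradient f (u + t • v) - gradient f u, v⟫
        ≤ ‖gradient f (u + t • v) - gradient f u‖ * ‖v‖ := real_inner_le_norm _ _
      _ ≤ L * ‖u + t • v - u‖ * ‖v‖ := by gcongr; exact hL _ _
      _ = L * t * ‖v‖ ^ 2 := by rw [hnorm]; ring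
  have := hanti (by simp) (by simp) zero_le_one
  simp only [φ, zero_smul, add_zero, one_smul, zero_mul, one_pow, mul_one, sub_zero] at this
  linarith

theorem image_sub_smul_le {f : E → ℝ} {L η : ℝ} (hf : Differentiable ℝ f)
    (hL : ∀ x y, ‖gradient f x - gradient f y‖ ≤ L * ‖x - y‖) (hη : 0 ≤ η) (hηL : η * L ≤ 1)
    (u w : E) :
    f (u - η • w) ≤ f u - η / 2 * ‖gradient f u‖ ^ 2 + η / 2 * ‖w - gradient f u‖ ^ 2 := by
  have hdesc := image_add_le_of_norm_gradient_sub_le hf hL u (-(η • w))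
  rw [← sub_eq_add_neg, inner_neg_right, real_inner_smul_right, norm_neg, norm_smul,
    Real.norm_of_nonneg hη] at hdesc
  have hsq := norm_sub_sq_real w (gradient f u)
  rw [real_inner_comm] at hsq
  have : L / 2 * (η * ‖w‖) ^ 2 ≤ η / 2 * ‖w‖ ^ 2 := by
    have := mul_le_mul_of_nonneg_right hηL (mul_nonneg hη (sq_nonneg ‖w‖))
    nlinarith
  nlinarith

end Gradient

theorem sq_sum_add_const_le {ι : Type*} (s : Finset ι) (b : ι → ℝ) (c : ℝ) :
    (∑ i ∈ s, (b i + c)) ^ 2 ≤ 2 * #s * (∑ i ∈ s, b i ^ 2 + #s * c ^ 2) := by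
  calc (∑ i ∈ s, (b i + c)) ^ 2 ≤ #s * ∑ i ∈ s, (b i + c) ^ 2 := sq_sum_le_card_mul_sum_sq
    _ ≤ #s * ∑ i ∈ s, 2 * (b i ^ 2 + c ^ 2) := by gcongr with i; exact add_sq_le
    _ = 2 * #s * (∑ i ∈ s, b i ^ 2 + #s * c ^ 2) := by
      rw [← mul_sum, sum_add_distrib, sum_const, nsmul_eq_mul]; ring

section BiasedGradientSteps

variable {E : Type*} [NormedAddCommGroup E] [InnerProductSpace ℝ E] [CompleteSpace E]
  {f : E → ℝ} {L δ η S : ℝ} {K : ℕ} {z d : ℕ → E}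

theorem norm_sub_le_of_biasedSteps (hz : ∀ k < K, z (k + 1) = z k - η • d k)
    (hd : ∀ k < K, ‖d k - gradient f (z k)‖ ≤ S + δ * ‖z k - z 0‖)
    (hη : 0 ≤ η) (hδ : 0 ≤ δ) (hS : 0 ≤ S) (hq : η * δ * K ≤ 1 / 2) {k : ℕ} (hk : k ≤ K) :
    ‖z k - z 0‖ ≤ 2 * (η * ∑ j ∈ range K, (‖gradient f (z j)‖ + S)) := by
  set A := η * ∑ j ∈ range K, (‖gradient f (z j)‖ + S)
  have hA : 0 ≤ A := by positivity
  have hstep : ∀ j < K, ‖z (j + 1) - z j‖ ≤ η * (‖gradient f (z j)‖ + S + δ * ‖z j - z 0‖) := by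
    intro j hj
    calc ‖z (j + 1) - z j‖ = η * ‖gradient f (z j) + (d j - gradient f (z j))‖ := by
          rw [hz j hj, sub_sub_cancel_left, norm_neg, norm_smul, Real.norm_of_nonneg hη,
            add_sub_cancel]
      _ ≤ η * (‖gradient f (z j)‖ + S + δ * ‖z j - z 0‖) := by
          rw [add_assoc]; gcongr; exact (norm_add_le _ _).trans (by gcongr; exact hd j hj)
  induction k using Nat.strong_induction_on with
  | _ k ih =>
  calc ‖z k - z 0‖ = dist (z 0) (z k) := by rw [dist_comm, dist_eq_norm]
    _ ≤ ∑ j ∈ range k, (η * (‖gradient f (z j)‖ + S) + η * δ * (2 * A)) := by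
      refine dist_le_range_sum_of_dist_le k fun {j} hj => ?_
      rw [dist_comm, dist_eq_norm]
      refine (hstep j (by omega)).trans ?_
      have := ih j hj (by omega)
      rw [mul_add, mul_assoc η δ]
      gcongr
    _ = η * ∑ j ∈ range k, (‖gradient f (z j)‖ + S) + k * (η * δ * (2 * A)) := by
      rw [sum_add_distrib, ← mul_sum, sum_const, card_range, nsmul_eq_mul]
    _ ≤ A + K * (η * δ * (2 * A)) := by
      gcongr
      exact mul_le_mul_of_nonneg_left
        (sum_le_sum_of_subset_of_nonneg (range_subset_range.2 hk) fun _ _ _ => by positivity) hη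
    _ ≤ 2 * A := by nlinarith [mul_le_mul_of_nonneg_left hq (by positivity : (0 : ℝ) ≤ 2 * A)]

theorem sq_norm_sub_le_of_biasedSteps (hz : ∀ k < K, z (k + 1) = z k - η • d k)
    (hd : ∀ k < K, ‖d k - gradient f (z k)‖ ≤ S + δ * ‖z k - z 0‖)
    (hη : 0 ≤ η) (hδ : 0 ≤ δ) (hS : 0 ≤ S) (hq : η * δ * K ≤ 1 / 2) {k : ℕ} (hk : k ≤ K) :
    ‖z k - z 0‖ ^ 2 ≤ 8 * η ^ 2 * K * (∑ j ∈ range K, ‖gradient f (z j)‖ ^ 2 + K * S ^ 2) := by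
  have hsq := sq_sum_add_const_le (range K) (fun j => ‖gradient f (z j)‖) S
  rw [card_range] at hsq
  calc ‖z k - z 0‖ ^ 2 ≤ (2 * (η * ∑ j ∈ range K, (‖gradient f (z j)‖ + S))) ^ 2 := by
        gcongr; exact norm_sub_le_of_biasedSteps hz hd hη hδ hS hq hk
    _ ≤ _ := by
        rw [mul_pow, mul_pow]
        nlinarith [mul_le_mul_of_nonneg_left hsq (by positivity : (0 : ℝ) ≤ 4 * η ^ 2)]

theorem image_le_of_biasedSteps (hf : Differentiable ℝ f)
    (hL : ∀ x y, ‖gradient f x - gradient f y‖ ≤ L * ‖x - y‖)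
    (hz : ∀ k < K, z (k + 1) = z k - η • d k)
    (hd : ∀ k < K, ‖d k - gradient f (z k)‖ ≤ S + δ * ‖z k - z 0‖)
    (hη : 0 ≤ η) (hηL : η * L ≤ 1) (hδ : 0 ≤ δ) (hS : 0 ≤ S) (hq : η * δ * K ≤ 1 / 8) :
    f (z K) ≤ f (z 0) - η / 4 * ∑ k ∈ range K, ‖gradient f (z k)‖ ^ 2 + 2 * η * K * S ^ 2 := by
  set G := ∑ k ∈ range K, ‖gradient f (z k)‖ ^ 2
  set D := 8 * η ^ 2 * K * (G + K * S ^ 2)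
  have hstep : ∀ k ∈ range K, f (z (k + 1)) - f (z k)
      ≤ -(η / 2 * ‖gradient f (z k)‖ ^ 2) + η * (S ^ 2 + δ ^ 2 * D) := by
    intro k hk
    have hk := mem_range.1 hk
    have hbias : ‖d k - gradient f (z k)‖ ^ 2 ≤ 2 * (S ^ 2 + δ ^ 2 * D) := by
      have hdrift := sq_norm_sub_le_of_biasedSteps hz hd hη hδ hS (by linarith) hk.le
      calc ‖d k - gradient f (z k)‖ ^ 2 ≤ (S + δ * ‖z k - z 0‖) ^ 2 := by gcongr; exact hd k hk
        _ ≤ 2 * (S ^ 2 + δ ^ 2 * ‖z k - z 0‖ ^ 2) := by rw [← mul_pow]; exact add_sq_le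
        _ ≤ 2 * (S ^ 2 + δ ^ 2 * D) := by gcongr
    have := image_sub_smul_le hf hL hη hηL (z k) (d k)
    rw [← hz k hk] at this
    nlinarith
  have htel := sum_le_sum hstep
  rw [sum_range_sub (fun k => f (z k)), sum_add_distrib, sum_neg_distrib, ← mul_sum, sum_const,
    card_range, nsmul_eq_mul] at htel
  change f (z K) - f (z 0) ≤ -(η / 2 * G) + K * (η * (S ^ 2 + δ ^ 2 * D)) at htel
  have hD : K * (η * (δ ^ 2 * D)) = 8 * (η * δ * K) ^ 2 * (η * (G + K * S ^ 2)) := by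
    simp only [D]; ring
  have hq2 : 8 * (η * δ * K) ^ 2 ≤ 1 / 8 := by
    nlinarith [pow_le_pow_left₀ (by positivity : 0 ≤ η * δ * K) hq 2]
  nlinarith [mul_le_mul_of_nonneg_right hq2 (by positivity : 0 ≤ η * (G + K * S ^ 2)),
    (by positivity : 0 ≤ η * G), (by positivity : 0 ≤ η * K * S ^ 2)]

end BiasedGradientSteps

theorem sq_one_sub_mul_add_le {a s e : ℝ} (ha0 : 0 < a) (ha1 : a ≤ 1) :
    ((1 - a) * (s + e)) ^ 2 ≤ (1 - a) * s ^ 2 + 3 / a * e ^ 2 := by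
  have hyoung : (s + e) ^ 2 ≤ (1 + a / 2) * s ^ 2 + (1 + 2 / a) * e ^ 2 := by
    have hexp : a / 2 * (s - 2 / a * e) ^ 2 = a / 2 * s ^ 2 - 2 * s * e + 2 / a * e ^ 2 := by
      field_simp; ring
    nlinarith [mul_nonneg (by positivity : 0 ≤ a / 2) (sq_nonneg (s - 2 / a * e))]
  have h1 : (1 - a) ^ 2 * (1 + a / 2) ≤ 1 - a := by
    nlinarith [mul_nonneg (sub_nonneg.2 ha1) (by positivity : 0 ≤ a / 2 + a ^ 2 / 2)]
  have h2 : (1 - a) ^ 2 * (1 + 2 / a) ≤ 3 / a := by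
    have : 1 ≤ 1 / a := by rw [le_div_iff₀ ha0]; linarith
    have : (1 - a) ^ 2 ≤ 1 := by nlinarith
    calc (1 - a) ^ 2 * (1 + 2 / a) ≤ 1 * (1 + 2 / a) := by gcongr
      _ ≤ 3 / a := by rw [one_mul, div_eq_mul_one_div 3, div_eq_mul_one_div 2]; linarith
  calc ((1 - a) * (s + e)) ^ 2 = (1 - a) ^ 2 * (s + e) ^ 2 := by ring
    _ ≤ (1 - a) ^ 2 * ((1 + a / 2) * s ^ 2 + (1 + 2 / a) * e ^ 2) := by gcongr
    _ ≤ (1 - a) * s ^ 2 + 3 / a * e ^ 2 := by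
      nlinarith [mul_le_mul_of_nonneg_right h1 (sq_nonneg s),
        mul_le_mul_of_nonneg_right h2 (sq_nonneg e)]

theorem sq_norm_momentum_sub_le {E F : Type*} [SeminormedAddCommGroup E]
    [SeminormedAddCommGroup F] [NormedSpace ℝ F] {g : E → F} {δ a : ℝ}
    (hg : ∀ u v, ‖g u - g v‖ ≤ δ * ‖u - v‖) (ha0 : 0 < a) (ha1 : a ≤ 1) (m : F) (x x' : E) :
    ‖(1 - a) • m + a • g x - g x‖ ^ 2 ≤
      (1 - a) * ‖m - g x'‖ ^ 2 + 3 / a * δ ^ 2 * ‖x - x'‖ ^ 2 := by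
  have hnorm : ‖(1 - a) • m + a • g x - g x‖ = (1 - a) * ‖m - g x‖ := by
    rw [show (1 - a) • m + a • g x - g x = (1 - a) • (m - g x) by module, norm_smul,
      Real.norm_of_nonneg (by linarith)]
  calc ‖(1 - a) • m + a • g x - g x‖ ^ 2 ≤ ((1 - a) * (‖m - g x'‖ + δ * ‖x - x'‖)) ^ 2 := by
        rw [hnorm]
        gcongr ((1 - a) * ?_) ^ 2
        exact norm_sub_apply_le_of_lipschitz hg m x x'
    _ ≤ _ := by rw [mul_assoc, ← mul_pow]; exact sq_one_sub_mul_add_le ha0 ha1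

theorem mul_sum_sq_le_of_sq_le_one_sub_mul {S D : ℕ → ℝ} {a c : ℝ} {T : ℕ} (ha0 : 0 ≤ a)
    (ha1 : a ≤ 1) (hc : 0 ≤ c) (hD0 : D 0 = 0)
    (hrec : ∀ t < T, S (t + 1) ^ 2 ≤ (1 - a) * S t ^ 2 + c * D t ^ 2) :
    a * ∑ t ∈ range T, S (t + 1) ^ 2 ≤ S 0 ^ 2 + c * ∑ t ∈ range T, D (t + 1) ^ 2 := by
  have hsum := sum_le_sum fun t ht => hrec t (mem_range.1 ht)
  rw [sum_add_distrib, ← mul_sum, ← mul_sum] at hsum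
  have hS : ∑ t ∈ range T, S t ^ 2 + S T ^ 2 = S 0 ^ 2 + ∑ t ∈ range T, S (t + 1) ^ 2 := by
    rw [← sum_range_succ, sum_range_succ', add_comm]
  have hD : ∑ t ∈ range T, D t ^ 2 + D T ^ 2 = ∑ t ∈ range T, D (t + 1) ^ 2 := by
    rw [← sum_range_succ, sum_range_succ', hD0]; ring
  have hS' : ∑ t ∈ range T, S t ^ 2 ≤ S 0 ^ 2 + ∑ t ∈ range T, S (t + 1) ^ 2 := by
    linarith [sq_nonneg (S T)]
  have hD' : ∑ t ∈ range T, D t ^ 2 ≤ ∑ t ∈ range T, D (t + 1) ^ 2 := by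
    linarith [sq_nonneg (D T)]
  nlinarith [mul_le_mul_of_nonneg_left hS' (by linarith : 0 ≤ 1 - a),
    mul_le_mul_of_nonneg_left hD' hc, mul_nonneg ha0 (sq_nonneg (S 0))]

theorem mul_sum_le_of_descent_of_momentum {F S D G : ℕ → ℝ} {η δ a fstar : ℝ} {K T : ℕ}
    (hη : 0 < η) (hδ : 0 < δ) (ha : a = 36 * δ * K * η) (ha0 : 0 < a) (ha1 : a ≤ 1)
    (hG : ∀ t, 0 ≤ G t) (hD0 : D 0 = 0) (hF : fstar ≤ F T)
    (hdesc : ∀ t < T, F (t + 1) ≤ F t - η / 4 * G (t + 1) + 2 * η * K * S (t + 1) ^ 2)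
    (hdisp : ∀ t < T, D (t + 1) ^ 2 ≤ 8 * η ^ 2 * K * (G (t + 1) + K * S (t + 1) ^ 2))
    (hmom : ∀ t < T, S (t + 1) ^ 2 ≤ (1 - a) * S t ^ 2 + 3 / a * δ ^ 2 * D t ^ 2) :
    η / 8 * ∑ t ∈ range T, G (t + 1) ≤ F 0 - fstar + S 0 ^ 2 / (8 * δ) := by
  set sG := ∑ t ∈ range T, G (t + 1)
  set sS := ∑ t ∈ range T, S (t + 1) ^ 2
  have hsG : 0 ≤ sG := sum_nonneg fun t _ => hG (t + 1)
  have hsF : F T - F 0 ≤ -(η / 4 * sG) + 2 * η * K * sS := by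
    have hstep : ∀ t ∈ range T,
        F (t + 1) - F t ≤ -(η / 4 * G (t + 1)) + 2 * η * K * S (t + 1) ^ 2 :=
      fun t ht => by linarith [hdesc t (mem_range.1 ht)]
    have := sum_le_sum hstep
    rwa [sum_range_sub, sum_add_distrib, sum_neg_distrib, ← mul_sum, ← mul_sum] at this
  have hsD : ∑ t ∈ range T, D (t + 1) ^ 2 ≤ 8 * η ^ 2 * K * (sG + K * sS) := by
    have := sum_le_sum fun t ht => hdisp t (mem_range.1 ht)
    rwa [← mul_sum, sum_add_distrib, ← mul_sum] at this
  have hK : (K : ℝ) ≠ 0 := by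
    rintro hK
    rw [ha, hK] at ha0
    simp at ha0
  have hsS : a * sS ≤ S 0 ^ 2 + 2 / 3 * δ * η * (sG + K * sS) := by
    have hc : 3 / a * δ ^ 2 * (8 * η ^ 2 * K) = 2 / 3 * δ * η := by
      rw [ha]; field_simp; ring
    calc a * sS ≤ S 0 ^ 2 + 3 / a * δ ^ 2 * ∑ t ∈ range T, D (t + 1) ^ 2 :=
          mul_sum_sq_le_of_sq_le_one_sub_mul ha0.le ha1 (by positivity) hD0 hmom
      _ ≤ S 0 ^ 2 + 3 / a * δ ^ 2 * (8 * η ^ 2 * K * (sG + K * sS)) := by gcongr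
      _ = S 0 ^ 2 + 2 / 3 * δ * η * (sG + K * sS) := by rw [← hc]; ring
  -- `a = 36 δ K η` absorbs the term `2/3 δ η K sS`, leaving `106/3 δ K η sS`.
  have hsS' : 106 / 3 * (η * K * sS) ≤ S 0 ^ 2 / δ + 2 / 3 * (η * sG) := by
    refine le_of_mul_le_mul_left ?_ hδ
    rw [mul_add, mul_div_cancel₀ _ hδ.ne']
    rw [ha] at hsS
    linarith
  have hS0 : S 0 ^ 2 / (8 * δ) = 1 / 8 * (S 0 ^ 2 / δ) := by ring
  linarith [mul_nonneg hη.le hsG, (by positivity : 0 ≤ S 0 ^ 2 / δ)]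

theorem one_div_min_one_div_le {L M : ℝ} (hL : 0 < L) (hM : 0 < M) :
    1 / min (1 / L) (1 / M) ≤ L + M := by
  rcases min_cases (1 / L) (1 / M) with ⟨hmin, -⟩ | ⟨hmin, -⟩ <;>
    rw [hmin, one_div_one_div] <;> linarith

theorem one_div_mul_le_of_mul_le {η B s F N : ℝ} (hη : 0 < η) (hinv : 1 / η ≤ B) (hs : 0 ≤ s)
    (hN : 0 ≤ N) (h : η / 8 * s ≤ F) : 1 / (8 * N) * s ≤ B * F / N := by
  have hF : 0 ≤ F := le_trans (by positivity) h
  calc 1 / (8 * N) * s = s / 8 / N := by ring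
    _ ≤ 1 / η * F / N := by
      gcongr
      rw [one_div_mul_eq_div, le_div_iff₀ hη]
      linarith
    _ ≤ B * F / N := by gcongr

theorem stmt_12_general {d : ℕ} (f h : EuclideanSpace ℝ (Fin d) → ℝ) (L δ fstar : ℝ)
    (hL : 0 < L) (hδ : 0 < δ)
    (hfd : Differentiable ℝ f)
    (hsmooth : ∀ x y : EuclideanSpace ℝ (Fin d),
      ‖gradient f x - gradient f y‖ ≤ L * ‖x - y‖)
    (hfbdd : ∀ x, fstar ≤ f x)
    (hf : ContDiff ℝ 2 f) (hh : ContDiff ℝ 2 h)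
    (hsim : ∀ x, ‖iteratedFDeriv ℝ 2 f x - iteratedFDeriv ℝ 2 h x‖ ≤ δ)
    (K T : ℕ) (hK : 1 ≤ K)
    (η a : ℝ) (hη : η = min (1 / L) (1 / (192 * δ * K))) (ha : a = 36 * δ * K * η)
    (x : ℕ → EuclideanSpace ℝ (Fin d))
    (m : ℕ → EuclideanSpace ℝ (Fin d))
    (y : ℕ → ℕ → EuclideanSpace ℝ (Fin d))
    (hm : ∀ t, 1 ≤ t → t ≤ T →
      m t = (1 - a) • m (t - 1) + a • (gradient f (x (t - 1)) - gradient h (x (t - 1))))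
    (hy0 : ∀ t, 1 ≤ t → t ≤ T → y t 0 = x (t - 1))
    (hyk : ∀ t, 1 ≤ t → t ≤ T → ∀ k, 1 ≤ k → k ≤ K →
      y t k = y t (k - 1) - η • (gradient h (y t (k - 1)) + m t))
    (hx : ∀ t, 1 ≤ t → t ≤ T → x t = y t K)
    (Ftil : ℝ)
    (hFtil : Ftil = f (x 0) - fstar
      + ‖m 0 - gradient f (x 0) + gradient h (x 0)‖ ^ 2 / (8 * δ)) :
    (1 / (8 * K * T)) *
        ∑ t ∈ Finset.Icc 1 T, ∑ k ∈ Finset.range K, ‖gradient f (y t k)‖ ^ 2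
      ≤ (L + 192 * δ * K) * Ftil / (K * T) := by
  have hM : 0 < 192 * δ * K := by positivity
  have hη0 : 0 < η := hη ▸ lt_min (by positivity) (by positivity)
  have hηL : η * L ≤ 1 := (le_div_iff₀ hL).1 (hη ▸ min_le_left _ _)
  have hηM : η * (192 * δ * K) ≤ 1 := (le_div_iff₀ hM).1 (hη ▸ min_le_right _ _)
  have hinv : 1 / η ≤ L + 192 * δ * K := hη ▸ one_div_min_one_div_le hL hM
  have ha0 : 0 < a := by rw [ha]; positivity
  have ha1 : a ≤ 1 := by rw [ha]; linarith
  have hlip := norm_gradient_sub_gradient_sub_le hf hh hsim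
  have hsteps : ∀ t < T, ∀ k < K,
      y (t + 1) (k + 1) = y (t + 1) k - η • (gradient h (y (t + 1) k) + m (t + 1)) :=
    fun t ht k hk => by simpa using hyk (t + 1) (by omega) (by omega) (k + 1) (by omega) (by omega)
  have hbias (t k : ℕ) := norm_gradient_add_sub_gradient_le hlip (m (t + 1)) (y (t + 1) k)
    (y (t + 1) 0)
  have hmain := mul_sum_le_of_descent_of_momentum (T := T) (F := fun t => f (x t))
    -- `t - 1` truncates at `0`, so `S 0 = ‖m 0 - (∇f - ∇h) (x 0)‖` and `D 0 = 0`.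
    (S := fun t => ‖m t - (gradient f (x (t - 1)) - gradient h (x (t - 1)))‖)
    (D := fun t => ‖x t - x (t - 1)‖) (G := fun t => ∑ k ∈ range K, ‖gradient f (y t k)‖ ^ 2)
    hη0 hδ ha ha0 ha1 (fun t => by positivity) (by simp) (hfbdd _)
    (fun t ht => by
      simpa [← hx (t + 1) (by omega) (by omega), hy0 (t + 1) (by omega) (by omega)] using
        image_le_of_biasedSteps hfd hsmooth (hsteps t ht) (fun k _ => hbias t k) hη0.le hηL hδ.le
          (norm_nonneg _) (by linarith))
    (fun t ht => by
      simpa [← hx (t + 1) (by omega) (by omega), hy0 (t + 1) (by omega) (by omega)] using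
        sq_norm_sub_le_of_biasedSteps (hsteps t ht) (fun k _ => hbias t k) hη0.le hδ.le
          (norm_nonneg _) (by linarith) le_rfl)
    (fun t ht => by
      simpa [hm (t + 1) (by omega) (by omega)] using
        sq_norm_momentum_sub_le hlip ha0 ha1 (m t) (x t) (x (t - 1)))
  simp only [zero_tsub, ← sub_add, ← hFtil] at hmain
  rw [← Ico_add_one_right_eq_Icc, sum_Ico_eq_sum_range, add_tsub_cancel_right]
  simp only [add_comm 1]
  rw [mul_assoc (8 : ℝ)]
  exact one_div_mul_le_of_mul_le hη0 hinv (by positivity) (by positivity) hmain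

/-- convergence of the AuxMOM algorithm in the noiseless regime. -/
theorem stmt_12 {d : ℕ} (f h : EuclideanSpace ℝ (Fin d) → ℝ) (L δ fstar : ℝ)
    (hL : 0 < L) (hδ : 0 < δ)
    (hfd : Differentiable ℝ f)
    (hsmooth : ∀ x y : EuclideanSpace ℝ (Fin d),
      ‖gradient f x - gradient f y‖ ≤ L * ‖x - y‖)
    (hfbdd : ∀ x, fstar ≤ f x)
    (hf : ContDiff ℝ 2 f) (hh : ContDiff ℝ 2 h)
    (hsim : ∀ x, ‖iteratedFDeriv ℝ 2 f x - iteratedFDeriv ℝ 2 h x‖ ≤ δ)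
    (K T : ℕ) (hK : 1 ≤ K) (hT : 1 ≤ T)
    (η a : ℝ) (hη : η = min (1 / L) (1 / (192 * δ * K))) (ha : a = 36 * δ * K * η)
    (x : ℕ → EuclideanSpace ℝ (Fin d))
    (m : ℕ → EuclideanSpace ℝ (Fin d))
    (y : ℕ → ℕ → EuclideanSpace ℝ (Fin d))
    (hm : ∀ t, 1 ≤ t → t ≤ T →
      m t = (1 - a) • m (t - 1) + a • (gradient f (x (t - 1)) - gradient h (x (t - 1))))
    (hy0 : ∀ t, 1 ≤ t → t ≤ T → y t 0 = x (t - 1))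
    (hyk : ∀ t, 1 ≤ t → t ≤ T → ∀ k, 1 ≤ k → k ≤ K →
      y t k = y t (k - 1) - η • (gradient h (y t (k - 1)) + m t))
    (hx : ∀ t, 1 ≤ t → t ≤ T → x t = y t K)
    (Ftil : ℝ)
    (hFtil : Ftil = f (x 0) - fstar
      + ‖m 0 - gradient f (x 0) + gradient h (x 0)‖ ^ 2 / (8 * δ)) :
    (1 / (8 * K * T)) *
        ∑ t ∈ Finset.Icc 1 T, ∑ k ∈ Finset.range K, ‖gradient f (y t k)‖ ^ 2
      ≤ (L + 192 * δ * K) * Ftil / (K * T) :=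
  stmt_12_general f h L δ fstar hL hδ hfd hsmooth hfbdd hf hh hsim K T hK η a hη ha x m y hm hy0 hyk
    hx Ftil hFtil
end
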